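/- arXiv:0903.0056 — 4 statements merged into one kernel-verified Lean document; each statement's English description precedes it below -/
import Mathlib

section
/- Let T be a pretriangulated category. Let X, N₊, N₋, Z be objects of T, and let φ : X → X, j⁺ : X ⊕ N₊ → Z, j⁻ : X ⊕ N₋ → Z and ∂ : Z → ΣX ⊕ ΣX be morphisms. Let ψ : X ⊕ X → (X ⊕ N₊) ⊕ (X ⊕ N₋) be the morphism whose components are: first X → X ⊕ N₊ is ι_X; second X → X ⊕ N₊ is ι_X; first X → X ⊕ N₋ is ι_X; second X → X ⊕ N₋ is ι_X ∘ φ. Suppose that the triangle X ⊕ X →ψ (X ⊕ N₊) ⊕ (X ⊕ N₋) →[j⁺,j⁻] Z →∂ Σ(X ⊕ X) is a distinguished triangle. Then there exists a morphism ∂′ : Z → ΣX such that the triangle X →(0, 1_X − φ, 0) N₊ ⊕ X ⊕ N₋ →(j⁺∘ι_{N₊}, −j⁻∘ι_X, j⁻∘ι_{N₋}) Z →∂′ ΣX is a distinguished triangle. -/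
open CategoryTheory Limits Pretriangulated

/-!
The changes of coordinates `(x, y) ↦ (x + y, y)` on `X ⊞ X` and
`((x, n), (y, m)) ↦ (x, ((n, x - y), m))` on the middle object turn `ψ` into `𝟙 X ⊞ f` with
`f = (0, 𝟙 - φ, 0)`. A cone of a direct sum of morphisms is the direct sum of their cones, and the
cone of `𝟙 X` is zero, so `Z` is a cone of `f`.
-/

namespace CategoryTheory.Limits

variable {C : Type*} [Category C]

@[simps]
noncomputable def biprodIsoPi [HasZeroMorphisms C] (F : WalkingPair → C)
    [HasBinaryBiproduct (F .left) (F .right)] [HasProduct F] : F .left ⊞ F .right ≅ ∏ᶜ F where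
  hom := Pi.lift fun | .left => biprod.fst | .right => biprod.snd
  inv := biprod.lift (Pi.π F .left) (Pi.π F .right)
  inv_hom_id := Pi.hom_ext _ _ (by rintro (_ | _) <;> simp)

lemma biprod_map_comp_biprodIsoPi_hom [HasZeroMorphisms C] {F G : WalkingPair → C}
    [HasBinaryBiproduct (F .left) (F .right)] [HasProduct F]
    [HasBinaryBiproduct (G .left) (G .right)] [HasProduct G] (φ : ∀ j, F j ⟶ G j) :
    biprod.map (φ .left) (φ .right) ≫ (biprodIsoPi G).hom =
      (biprodIsoPi F).hom ≫ Limits.Pi.map φ :=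
  Pi.hom_ext _ _ (by rintro (_ | _) <;> simp)

@[simps]
noncomputable def biprodDiffIso [Preadditive C] [HasBinaryBiproducts C] (A P Q : C) :
    (A ⊞ P) ⊞ (A ⊞ Q) ≅ A ⊞ ((P ⊞ A) ⊞ Q) where
  hom := biprod.desc
    (biprod.lift biprod.fst (biprod.lift (biprod.lift biprod.snd biprod.fst) 0))
    (biprod.lift 0 (biprod.lift (biprod.lift 0 (-biprod.fst)) biprod.snd))
  inv := biprod.desc
    (biprod.lift (biprod.lift (𝟙 A) 0) (biprod.lift (𝟙 A) 0))
    (biprod.lift (biprod.lift 0 (biprod.fst ≫ biprod.fst))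
      (biprod.lift (-(biprod.fst ≫ biprod.snd)) biprod.snd))

end CategoryTheory.Limits

namespace CategoryTheory.Pretriangulated

open ZeroObject

variable {C : Type*} [Category C] [HasZeroObject C] [HasShift C ℤ] [Preadditive C]
  [∀ n : ℤ, (shiftFunctor C n).Additive] [Pretriangulated C]

/- `Triangle.mk` is not reducible, so `simp` only sees through the objects of a triangle after
`unfold Triangle.mk` or a type ascription. -/

lemma mk_distinguished_of_iso₁₂ {X Y Z X' Y' : C} {f : X ⟶ Y} {g : Y ⟶ Z}
    {h : Z ⟶ X⟦(1 : ℤ)⟧} (hT : Triangle.mk f g h ∈ distTriang C) (e₁ : X ≅ X') (e₂ : Y ≅ Y')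
    (f' : X' ⟶ Y') (comm : f ≫ e₂.hom = e₁.hom ≫ f') :
    Triangle.mk f' (e₂.inv ≫ g) (h ≫ e₁.hom⟦(1 : ℤ)⟧') ∈ distTriang C := by
  refine isomorphic_distinguished _ hT _ (Triangle.isoMk _ _ e₁.symm e₂.symm (Iso.refl _) ?_ ?_ ?_)
    <;> unfold Triangle.mk
  · simp [Iso.eq_inv_comp, ← reassoc_of% comm]
  · simp
  · simp [← Functor.map_comp]

lemma contractible_distinguished_of_isIso {X Y : C} (f : X ⟶ Y) [IsIso f] :
    Triangle.mk f (0 : Y ⟶ 0) 0 ∈ distTriang C := by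
  refine isomorphic_distinguished _ (contractible_distinguished X) _
    (Triangle.isoMk _ _ (Iso.refl _) (asIso f).symm (Iso.refl _) ?_ ?_ ?_) <;>
    unfold contractibleTriangle <;> unfold Triangle.mk <;> simp

variable [HasBinaryBiproducts C]

lemma exists_iso_biprod_of_distinguished_biprod_map {T₁ T₂ : Triangle C}
    (hT₁ : T₁ ∈ distTriang C) (hT₂ : T₂ ∈ distTriang C) {Z : C} (g : T₁.obj₂ ⊞ T₂.obj₂ ⟶ Z)
    (h : Z ⟶ (T₁.obj₁ ⊞ T₂.obj₁)⟦(1 : ℤ)⟧)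
    (hT : Triangle.mk (biprod.map T₁.mor₁ T₂.mor₁) g h ∈ distTriang C) :
    ∃ e : Z ≅ T₁.obj₃ ⊞ T₂.obj₃, g ≫ e.hom = biprod.map T₁.mor₂ T₂.mor₂ := by
  let F := pairFunction T₁ T₂
  have hF : ∀ j, F j ∈ distTriang C := by
    rintro (_ | _)
    exacts [hT₁, hT₂]
  let e := isoTriangleOfIso₁₂ _ _ hT (productTriangle_distinguished F hF)
    (biprodIsoPi fun j => (F j).obj₁) (biprodIsoPi fun j => (F j).obj₂)
    (biprod_map_comp_biprodIsoPi_hom fun j => (F j).mor₁)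
  let e₃ : Z ≅ ∏ᶜ fun j => (F j).obj₃ := Triangle.π₃.mapIso e
  have comm₂ : g ≫ e₃.hom = biprod.map T₁.mor₂ T₂.mor₂ ≫ (biprodIsoPi fun j => (F j).obj₃).hom :=
    e.hom.comm₂.trans (biprod_map_comp_biprodIsoPi_hom fun j => (F j).mor₂).symm
  exact ⟨e₃ ≪≫ (biprodIsoPi _).symm,
    (Category.assoc _ _ _).symm.trans ((Iso.comp_inv_eq _).mpr comm₂)⟩

lemma exists_distinguished_of_biprod_map {X₁ X₂ Y₁ Y₂ Z : C} (f₁ : X₁ ⟶ Y₁) [IsIso f₁]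
    (f₂ : X₂ ⟶ Y₂) (g : Y₁ ⊞ Y₂ ⟶ Z) (h : Z ⟶ (X₁ ⊞ X₂)⟦(1 : ℤ)⟧)
    (hT : Triangle.mk (biprod.map f₁ f₂) g h ∈ distTriang C) :
    ∃ h' : Z ⟶ X₂⟦(1 : ℤ)⟧, Triangle.mk f₂ (biprod.inr ≫ g) h' ∈ distTriang C := by
  obtain ⟨C₂, g₂, h₂, hT₂⟩ := distinguished_cocone_triangle f₂
  obtain ⟨e, he⟩ : ∃ e : Z ≅ 0 ⊞ C₂, g ≫ e.hom = biprod.map 0 g₂ :=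
    exists_iso_biprod_of_distinguished_biprod_map (contractible_distinguished_of_isIso f₁) hT₂
      g h hT
  let u : Z ≅ C₂ := e ≪≫ (isoZeroBiprod (isZero_zero C)).symm
  have hu : biprod.inr ≫ g ≫ u.hom = g₂ := by simp [u, reassoc_of% he]
  refine ⟨u.hom ≫ h₂, isomorphic_distinguished _ hT₂ _
    (Triangle.isoMk _ _ (Iso.refl _) (Iso.refl _) u ?_ ?_ ?_)⟩ <;> unfold Triangle.mk
  · simp
  · simp [hu]
  · simp

end CategoryTheory.Pretriangulated

/-- Let `T` be a pretriangulated category, `X, N₊, N₋, Z` objects,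
`φ : X ⟶ X`, `j⁺ : X ⊞ N₊ ⟶ Z`, `j⁻ : X ⊞ N₋ ⟶ Z` and `d : Z ⟶ Σ(X ⊞ X)` morphisms.
If the triangle `X ⊞ X ⟶ψ (X ⊞ N₊) ⊞ (X ⊞ N₋) ⟶[j⁺,j⁻] Z ⟶∂ Σ(X ⊞ X)` is distinguished,
where `ψ` has components `(ι_X, ι_X; ι_X, ι_X ∘ φ)`, then there is `∂' : Z ⟶ ΣX` making
`X ⟶(0, 1-φ, 0) N₊ ⊞ X ⊞ N₋ ⟶(j⁺∘ι_{N₊}, -j⁻∘ι_X, j⁻∘ι_{N₋}) Z ⟶∂' ΣX` distinguished. -/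
theorem stmt0 {T : Type*} [Category T] [HasZeroObject T] [HasShift T ℤ]
    [Preadditive T] [∀ n : ℤ, (shiftFunctor T n).Additive] [Pretriangulated T]
    [HasBinaryBiproducts T]
    (X Np Nm Z : T) (φ : X ⟶ X)
    (jp : X ⊞ Np ⟶ Z) (jm : X ⊞ Nm ⟶ Z) (d : Z ⟶ (X ⊞ X)⟦(1 : ℤ)⟧)
    (hdist :
      Triangle.mk
        (biprod.desc (biprod.lift biprod.inl biprod.inl)
          (biprod.lift biprod.inl (φ ≫ biprod.inl))
          : X ⊞ X ⟶ (X ⊞ Np) ⊞ (X ⊞ Nm))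
        (biprod.desc jp jm) d ∈ distinguishedTriangles) :
    ∃ d' : Z ⟶ X⟦(1 : ℤ)⟧,
      Triangle.mk
        (biprod.lift (biprod.lift (0 : X ⟶ Np) (𝟙 X - φ)) (0 : X ⟶ Nm)
          : X ⟶ (Np ⊞ X) ⊞ Nm)
        (biprod.desc (biprod.desc (biprod.inr ≫ jp) (-(biprod.inl ≫ jm)))
          (biprod.inr ≫ jm))
        d' ∈ distinguishedTriangles := by
  set f : X ⟶ (Np ⊞ X) ⊞ Nm := biprod.lift (biprod.lift 0 (𝟙 X - φ)) 0
  obtain ⟨d', hd'⟩ := exists_distinguished_of_biprod_map (𝟙 X) f _ _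
    (mk_distinguished_of_iso₁₂ hdist (Biprod.unipotentLower (𝟙 X)) (biprodDiffIso X Np Nm)
      (biprod.map (𝟙 X) f) (by ext <;> simp [f, Biprod.ofComponents, sub_eq_add_neg]))
  refine ⟨d', ?_⟩
  convert hd' using 2
  ext <;> simp [biprod.lift_eq]
end

section
/- Let F be a finite quiver, v a new vertex not in F₀, and S a nonempty finite set of new arrows, each with source v and range in F₀; let F′ be the finite quiver with F′₀ = F₀ ∪ {v} and F′₁ = F₁ ∪ S. Then Sink(F′) = Sink(F), and for every abelian group V the homomorphisms D^V_F : V^{F₀∖Sink(F)} → V^{F₀} and D^V_{F′} : V^{F′₀∖Sink(F′)} → V^{F′₀} have isomorphic kernels and isomorphic cokernels. -/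
/-- A vertex `i` is a sink when it emits no arrow. -/
def IsSink {V A : Type} (s : A → V) (i : V) : Prop := ∀ α : A, s α ≠ i

instance {V A : Type} [Fintype A] [DecidableEq V] (s : A → V) :
    DecidablePred (IsSink s) := fun _ =>
  decidable_of_iff (∀ α, s _ ≠ _) Iff.rfl

/-- The homomorphism `D^W_F : W^{F₀∖Sink(F)} → W^{F₀}` given by
`(D x)(i) = (x i if i ∉ Sink F, else 0) − Σ_{j ∉ Sink F} n^F_{ji} • x j`, i.e. the map
written `1 − N_F^t` in the paper. -/
def Dmap {V A : Type} [Fintype V] [Fintype A] [DecidableEq V] (s r : A → V)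
    (W : Type) [AddCommGroup W] :
    ({ i : V // ¬ IsSink s i } → W) →+ (V → W) where
  toFun x := fun i =>
    (if h : ¬ IsSink s i then x ⟨i, h⟩ else 0)
      - ∑ j : { j : V // ¬ IsSink s j },
          (Fintype.card { α : A // s α = j.1 ∧ r α = i }) • x j
  map_zero' := by
    funext i
    simp only [Pi.zero_apply, smul_zero, Finset.sum_const_zero, sub_zero]
    split_ifs <;> rfl
  map_add' x y := by
    funext i
    simp only [Pi.add_apply, smul_add]
    rw [Finset.sum_add_distrib]
    by_cases h : ¬ IsSink s i
    · simp only [dif_pos h]; abel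
    · simp only [dif_neg h]; abel

section Aux

variable {V A S : Type} [Fintype V] [Fintype A] [Fintype S] [Nonempty S] [DecidableEq V]

lemma Dmap_apply {s r : A → V} {W : Type} [AddCommGroup W]
    (x : { i : V // ¬ IsSink s i } → W) (i : V) :
    Dmap s r W x i =
      (if h : ¬ IsSink s i then x ⟨i, h⟩ else 0)
        - ∑ j : { j : V // ¬ IsSink s j },
            (Fintype.card { α : A // s α = j.1 ∧ r α = i }) • x j := rfl

variable (S) in
def sP (s₀ : A → V) : A ⊕ S → V ⊕ Unit :=
  Sum.elim (fun a => Sum.inl (s₀ a)) (fun _ => Sum.inr ())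

def rP (r₀ : A → V) (ρ : S → V) : A ⊕ S → V ⊕ Unit :=
  Sum.elim (fun a => Sum.inl (r₀ a)) (fun x => Sum.inl (ρ x))

variable (s₀ r₀ : A → V) (ρ : S → V)

lemma sink_inl (i : V) : IsSink (sP S s₀) (Sum.inl i) ↔ IsSink s₀ i := by
  constructor
  · intro h a ha
    exact h (Sum.inl a) (by simp [sP, ha])
  · intro h α hα
    rcases α with a | x
    · exact h a (by simpa [sP] using hα)
    · simp [sP] at hα

lemma not_sink_inr : ¬ IsSink (sP S s₀) (Sum.inr ()) := fun h =>
  h (Sum.inr (Classical.arbitrary S)) rfl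

/-- the non-sinks of `F'` are the non-sinks of `F` plus the new vertex -/
def eNS : { j : V // ¬ IsSink s₀ j } ⊕ Unit ≃ { p : V ⊕ Unit // ¬ IsSink (sP S s₀) p } where
  toFun := Sum.elim (fun j => ⟨Sum.inl j.1, fun h => j.2 ((sink_inl s₀ j.1).mp h)⟩)
    (fun _ => ⟨Sum.inr (), not_sink_inr s₀⟩)
  invFun p := match p with
    | ⟨Sum.inl i, h⟩ => Sum.inl ⟨i, fun h' => h ((sink_inl s₀ i).mpr h')⟩
    | ⟨Sum.inr _, _⟩ => Sum.inr ()
  left_inv := by rintro (⟨i, h⟩ | ⟨⟩) <;> rfl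
  right_inv := by rintro ⟨i | ⟨⟩, h⟩ <;> rfl

lemma card_inl (j i : V) :
    Fintype.card { α : A ⊕ S // sP S s₀ α = Sum.inl j ∧ rP r₀ ρ α = Sum.inl i }
      = Fintype.card { a : A // s₀ a = j ∧ r₀ a = i } := by
  rw [Fintype.card_congr (Equiv.subtypeSum), Fintype.card_sum]
  have h1 : Fintype.card { b : S // sP S s₀ (Sum.inr b) = Sum.inl j
      ∧ rP r₀ ρ (Sum.inr b) = Sum.inl i } = 0 := by
    rw [Fintype.card_eq_zero_iff]
    exact ⟨fun ⟨b, hb⟩ => by simp [sP] at hb⟩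
  rw [h1, add_zero]
  exact Fintype.card_congr (Equiv.subtypeEquivRight (by simp [sP, rP]))

lemma card_inr (i : V) :
    Fintype.card { α : A ⊕ S // sP S s₀ α = Sum.inr () ∧ rP r₀ ρ α = Sum.inl i }
      = Fintype.card { x : S // ρ x = i } := by
  rw [Fintype.card_congr (Equiv.subtypeSum), Fintype.card_sum]
  have h1 : Fintype.card { a : A // sP S s₀ (Sum.inl a) = Sum.inr ()
      ∧ rP r₀ ρ (Sum.inl a) = Sum.inl i } = 0 := by
    rw [Fintype.card_eq_zero_iff]
    exact ⟨fun ⟨a, ha⟩ => by simp [sP] at ha⟩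
  rw [h1, zero_add]
  exact Fintype.card_congr (Equiv.subtypeEquivRight (by simp [sP, rP]))

lemma card_to_inr (p : V ⊕ Unit) :
    Fintype.card { α : A ⊕ S // sP S s₀ α = p ∧ rP r₀ ρ α = Sum.inr () } = 0 := by
  rw [Fintype.card_eq_zero_iff]
  exact ⟨fun ⟨α, hα⟩ => by rcases α with a | x <;> simp [rP] at hα⟩

variable {W : Type} [AddCommGroup W]

def resW (x' : { p : V ⊕ Unit // ¬ IsSink (sP S s₀) p } → W) :
    { j : V // ¬ IsSink s₀ j } → W := fun j => x' (eNS s₀ (Sum.inl j))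

def extW (x : { j : V // ¬ IsSink s₀ j } → W) :
    { p : V ⊕ Unit // ¬ IsSink (sP S s₀) p } → W := fun p =>
  Sum.elim x (fun _ => 0) ((eNS s₀).symm p)

lemma res_ext (x : { j : V // ¬ IsSink s₀ j } → W) : resW s₀ (extW (S := S) s₀ x) = x := by
  funext j
  simp [resW, extW]

lemma ext_eval_v (x : { j : V // ¬ IsSink s₀ j } → W) :
    extW (S := S) s₀ x (eNS s₀ (Sum.inr ())) = 0 := by
  simp [extW]

lemma Dmap_inr (x' : { p : V ⊕ Unit // ¬ IsSink (sP S s₀) p } → W) :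
    Dmap (sP S s₀) (rP r₀ ρ) W x' (Sum.inr ()) = x' (eNS s₀ (Sum.inr ())) := by
  rw [Dmap_apply]
  rw [dif_pos (not_sink_inr s₀)]
  have : ∀ j : { p : V ⊕ Unit // ¬ IsSink (sP S s₀) p },
      (Fintype.card { α : A ⊕ S // sP S s₀ α = j.1 ∧ rP r₀ ρ α = Sum.inr () }) • x' j = 0 :=
    fun j => by rw [card_to_inr s₀ r₀ ρ, zero_smul]
  rw [Finset.sum_congr rfl (fun j _ => this j), Finset.sum_const_zero, sub_zero]
  rfl

lemma Dmap_inl (x' : { p : V ⊕ Unit // ¬ IsSink (sP S s₀) p } → W) (i : V) :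
    Dmap (sP S s₀) (rP r₀ ρ) W x' (Sum.inl i) =
      Dmap s₀ r₀ W (resW s₀ x') i
        - (Fintype.card { x : S // ρ x = i }) • x' (eNS s₀ (Sum.inr ())) := by
  rw [Dmap_apply, Dmap_apply]
  have hsum : ∑ j : { p : V ⊕ Unit // ¬ IsSink (sP S s₀) p },
      (Fintype.card { α : A ⊕ S // sP S s₀ α = j.1 ∧ rP r₀ ρ α = Sum.inl i }) • x' j
      = (∑ j : { j : V // ¬ IsSink s₀ j },
          (Fintype.card { a : A // s₀ a = j.1 ∧ r₀ a = i }) • resW s₀ x' j)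
        + (Fintype.card { x : S // ρ x = i }) • x' (eNS s₀ (Sum.inr ())) := by
    rw [← Equiv.sum_comp (eNS s₀) (fun j =>
      (Fintype.card { α : A ⊕ S // sP S s₀ α = j.1 ∧ rP r₀ ρ α = Sum.inl i }) • x' j)]
    rw [Fintype.sum_sum_type]
    congr 1
    · exact Finset.sum_congr rfl fun j _ => by
        rw [show ((eNS s₀ (Sum.inl j)).1 : V ⊕ Unit) = Sum.inl j.1 from rfl,
          card_inl s₀ r₀ ρ]
        rfl
    · rw [Fintype.sum_unique]
      rw [show ((eNS s₀ (Sum.inr (default : Unit))).1 : V ⊕ Unit) = Sum.inr () from rfl,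
        card_inr s₀ r₀ ρ]
  rw [hsum]
  have hif : (if h : ¬ IsSink (sP S s₀) (Sum.inl i) then x' ⟨Sum.inl i, h⟩ else 0)
      = (if h : ¬ IsSink s₀ i then resW s₀ x' ⟨i, h⟩ else 0) := by
    by_cases h : IsSink s₀ i
    · rw [dif_neg (not_not_intro h), dif_neg (not_not_intro ((sink_inl s₀ i).mpr h))]
    · rw [dif_pos h, dif_pos (fun h' => h ((sink_inl s₀ i).mp h'))]
      rfl
  rw [hif]
  abel

end Aux

section Aux2

variable {V A S : Type} [Fintype V] [Fintype A] [Fintype S] [Nonempty S] [DecidableEq V]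
variable (s₀ r₀ : A → V) (ρ : S → V)
variable {W : Type} [AddCommGroup W]

lemma extW_apply (x : { j : V // ¬ IsSink s₀ j } → W) (q : { j : V // ¬ IsSink s₀ j } ⊕ Unit) :
    extW (S := S) s₀ x (eNS s₀ q) = Sum.elim x (fun _ => 0) q := by
  simp [extW]

def kerEquiv : AddMonoidHom.ker (Dmap s₀ r₀ W) ≃+
    AddMonoidHom.ker (Dmap (sP S s₀) (rP r₀ ρ) W) where
  toFun x := ⟨extW s₀ x.1, by
    have hx : Dmap s₀ r₀ W x.1 = 0 := x.2
    rw [AddMonoidHom.mem_ker]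
    funext p
    rcases p with i | ⟨⟩
    · rw [Dmap_inl s₀ r₀ ρ, res_ext, ext_eval_v, hx, smul_zero, sub_zero]
      rfl
    · rw [Dmap_inr s₀ r₀ ρ, ext_eval_v]
      rfl⟩
  invFun x' := ⟨resW s₀ x'.1, by
    have hx : Dmap (sP S s₀) (rP r₀ ρ) W x'.1 = 0 := x'.2
    have hv : x'.1 (eNS s₀ (Sum.inr ())) = 0 := by
      rw [← Dmap_inr s₀ r₀ ρ x'.1, hx]; rfl
    rw [AddMonoidHom.mem_ker]
    funext i
    have h1 := congrFun hx (Sum.inl i)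
    rw [Dmap_inl s₀ r₀ ρ, hv, smul_zero, sub_zero] at h1
    exact h1⟩
  left_inv x := Subtype.ext (res_ext (S := S) s₀ x.1)
  right_inv x' := by
    refine Subtype.ext ?_
    have hx : Dmap (sP S s₀) (rP r₀ ρ) W x'.1 = 0 := x'.2
    have hv : x'.1 (eNS s₀ (Sum.inr ())) = 0 := by
      rw [← Dmap_inr s₀ r₀ ρ x'.1, hx]; rfl
    funext p
    obtain ⟨q, rfl⟩ := (eNS s₀).surjective p
    rcases q with j | u
    · show extW (S := S) s₀ (resW s₀ x'.1) (eNS s₀ (Sum.inl j)) = x'.1 (eNS s₀ (Sum.inl j))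
      rw [extW_apply]
      rfl
    · show extW (S := S) s₀ (resW s₀ x'.1) (eNS s₀ (Sum.inr u)) = x'.1 (eNS s₀ (Sum.inr u))
      rw [extW_apply]
      exact hv.symm
  map_add' x y := by
    refine Subtype.ext ?_
    funext p
    obtain ⟨q, rfl⟩ := (eNS s₀).surjective p
    show extW (S := S) s₀ (x.1 + y.1) (eNS s₀ q) = extW s₀ x.1 (eNS s₀ q) + extW s₀ y.1 (eNS s₀ q)
    rw [extW_apply, extW_apply, extW_apply]
    rcases q with j | ⟨⟩ <;> simp

def phiH : ((V ⊕ Unit) → W) →+ (V → W) where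
  toFun f := fun i => f (Sum.inl i) + (Fintype.card { x : S // ρ x = i }) • f (Sum.inr ())
  map_zero' := by
    funext i
    simp only [Pi.zero_apply, smul_zero, add_zero]
  map_add' f g := by funext i; simp only [Pi.add_apply, smul_add]; abel

def psiH : (V → W) →+ ((V ⊕ Unit) → W) where
  toFun g := Sum.elim g 0
  map_zero' := by funext p; rcases p with i | ⟨⟩ <;> rfl
  map_add' f g := by funext p; rcases p with i | ⟨⟩ <;> simp

lemma phi_psi (g : V → W) : phiH (S := S) ρ (psiH g) = g := by
  funext i; simp [phiH, psiH]

lemma phi_D' (x' : { p : V ⊕ Unit // ¬ IsSink (sP S s₀) p } → W) :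
    phiH ρ (Dmap (sP S s₀) (rP r₀ ρ) W x') = Dmap s₀ r₀ W (resW s₀ x') := by
  funext i
  show Dmap (sP S s₀) (rP r₀ ρ) W x' (Sum.inl i)
      + (Fintype.card { x : S // ρ x = i }) • Dmap (sP S s₀) (rP r₀ ρ) W x' (Sum.inr ())
    = Dmap s₀ r₀ W (resW s₀ x') i
  rw [Dmap_inl s₀ r₀ ρ, Dmap_inr s₀ r₀ ρ]
  abel

lemma psi_D (x : { j : V // ¬ IsSink s₀ j } → W) :
    psiH (Dmap s₀ r₀ W x) = Dmap (sP S s₀) (rP r₀ ρ) W (extW s₀ x) := by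
  funext p
  rcases p with i | ⟨⟩
  · rw [show psiH (Dmap s₀ r₀ W x) (Sum.inl i) = Dmap s₀ r₀ W x i from rfl,
      Dmap_inl s₀ r₀ ρ, res_ext, ext_eval_v, smul_zero, sub_zero]
  · rw [show psiH (Dmap s₀ r₀ W x) (Sum.inr ()) = 0 from rfl,
      Dmap_inr s₀ r₀ ρ, ext_eval_v]

lemma sub_psi_phi (f : (V ⊕ Unit) → W) :
    f - psiH (phiH ρ f) ∈ AddMonoidHom.range (Dmap (sP S s₀) (rP r₀ ρ) W) := by
  classical
  have hw : ∃ w : { p : V ⊕ Unit // ¬ IsSink (sP S s₀) p } → W,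
      resW s₀ w = 0 ∧ w (eNS s₀ (Sum.inr ())) = f (Sum.inr ()) := by
    refine ⟨fun p => Sum.elim (fun _ => (0 : W)) (fun _ => f (Sum.inr ()))
      ((eNS s₀).symm p), ?_, ?_⟩
    · funext j; simp [resW]
    · simp
  obtain ⟨w, hres, hv⟩ := hw
  refine AddMonoidHom.mem_range.mpr ⟨w, ?_⟩
  funext p
  rcases p with i | ⟨⟩
  · rw [Dmap_inl s₀ r₀ ρ, hres, hv, map_zero]
    show 0 - _ = f (Sum.inl i) - (f (Sum.inl i) + _)
    abel
  · rw [Dmap_inr s₀ r₀ ρ, hv]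
    show f (Sum.inr ()) = f (Sum.inr ()) - 0
    rw [sub_zero]

lemma range_le_psi : AddMonoidHom.range (Dmap s₀ r₀ W) ≤
    AddSubgroup.comap (psiH (V := V) (W := W))
      (AddMonoidHom.range (Dmap (sP S s₀) (rP r₀ ρ) W)) := by
  rintro _ ⟨x, rfl⟩
  exact ⟨extW s₀ x, (psi_D s₀ r₀ ρ x).symm⟩

lemma range_le_phi : AddMonoidHom.range (Dmap (sP S s₀) (rP r₀ ρ) W) ≤
    AddSubgroup.comap (phiH (S := S) ρ) (AddMonoidHom.range (Dmap s₀ r₀ W)) := by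
  rintro _ ⟨x', rfl⟩
  exact ⟨resW s₀ x', (phi_D' s₀ r₀ ρ x').symm⟩

set_option maxHeartbeats 1000000 in
def cokerEquiv : ((V → W) ⧸ AddMonoidHom.range (Dmap s₀ r₀ W)) ≃+
    (((V ⊕ Unit) → W) ⧸ AddMonoidHom.range (Dmap (sP S s₀) (rP r₀ ρ) W)) where
  toFun := QuotientAddGroup.map _ _ psiH (range_le_psi s₀ r₀ ρ)
  invFun := QuotientAddGroup.map _ _ (phiH ρ) (range_le_phi s₀ r₀ ρ)
  left_inv q := by
    refine QuotientAddGroup.induction_on q fun g => ?_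
    rw [QuotientAddGroup.map_mk, QuotientAddGroup.map_mk, phi_psi]
  right_inv q := by
    refine QuotientAddGroup.induction_on q fun f => ?_
    rw [QuotientAddGroup.map_mk, QuotientAddGroup.map_mk]
    refine QuotientAddGroup.eq.mpr ?_
    rw [neg_add_eq_sub]
    exact sub_psi_phi s₀ r₀ ρ f
  map_add' x y := by
    exact (QuotientAddGroup.map _ _ psiH (range_le_psi s₀ r₀ ρ)).map_add x y

end Aux2

/-- Let `F` be a finite quiver (vertices `V`, arrows `A`), `v` a new
vertex, and `S` a nonempty finite set of new arrows with source `v` and ranges `ρ : S → V`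
in `F₀`; `F′` has vertices `V ⊕ Unit` and arrows `A ⊕ S`.  Then `Sink(F′) = Sink(F)`
(under the identification `i ↦ inl i`, and `v` is not a sink), and for every abelian
group `W` the maps `D^W_F` and `D^W_{F′}` have isomorphic kernels and cokernels. -/
theorem stmt6 (V A S : Type) [Fintype V] [Fintype A] [Fintype S] [Nonempty S]
    [DecidableEq V] (s₀ r₀ : A → V) (ρ : S → V) :
    ∀ (s' r' : A ⊕ S → V ⊕ Unit),
      s' = Sum.elim (fun a => Sum.inl (s₀ a)) (fun _ => Sum.inr ()) →
      r' = Sum.elim (fun a => Sum.inl (r₀ a)) (fun x => Sum.inl (ρ x)) →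
      -- Sink(F′) = Sink(F)
      ((∀ i : V, IsSink s' (Sum.inl i) ↔ IsSink s₀ i) ∧ ¬ IsSink s' (Sum.inr ())) ∧
      -- kernels and cokernels of the maps `1 − N^t` are isomorphic
      (∀ (W : Type) [AddCommGroup W],
        Nonempty ((AddMonoidHom.ker (Dmap s₀ r₀ W)) ≃+ (AddMonoidHom.ker (Dmap s' r' W))) ∧
        Nonempty (((V → W) ⧸ AddMonoidHom.range (Dmap s₀ r₀ W)) ≃+
          (((V ⊕ Unit) → W) ⧸ AddMonoidHom.range (Dmap s' r' W)))) := by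
  intro s' r' hs hr
  subst hs
  subst hr
  exact ⟨⟨fun i => sink_inl s₀ i, not_sink_inr s₀⟩,
    fun W _ => ⟨⟨kerEquiv s₀ r₀ ρ⟩, ⟨cokerEquiv s₀ r₀ ρ⟩⟩⟩
end

section
/- Let M be an abelian group and φ : M → M an endomorphism. Let M̂ be the direct limit (colimit) of the ℕ-indexed system M →φ M →φ M →φ ⋯, with canonical maps ι_n : M → M̂ (from the n-th copy), and let φ̂ : M̂ → M̂ be the endomorphism induced by φ (so φ̂ ∘ ι_n = ι_n ∘ φ for all n); φ̂ is an automorphism of M̂. Then ι₀ restricts to an isomorphism ker(id_M − φ) ≅ ker(id_{M̂} − φ̂), and ι₀ induces an isomorphism coker(id_M − φ) ≅ coker(id_{M̂} − φ̂). -/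
/-!
Every element of the colimit `M̂` has the form `ι n x`, and `ι n x = 0` exactly when
`φ^[k] x = 0` for some `k`; the latter is read off by comparing `M̂` with the cocone of germs at
infinity of the sequences `k ↦ φ^[k - n] x`. These two facts give the bijectivity of `φ̂` at once
(`φ̂ (ι (n + 1) x) = ι n x`). A `φ̂`-fixed point `ι n x` has `x - φ x` killed by some `φ^[k]`,
so `φ^[k] x` is a `φ`-fixed point mapping to it under `ι 0`. On cokernels, `x ≡ φ^[k] x` modulo
`range (id - φ)` by telescoping, so `ι 0 x ≡ ι n x` modulo `range (id - φ̂)` and a relation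
`ι 0 x = (id - φ̂) (ι n w)` pulls back to `M` after applying a power of `φ`.
-/

open Filter

universe u v

section Cocone

variable {M : Type u} {P : Type v} [AddCommGroup M] [AddCommGroup P]

def IsIterateCocone (φ : M →+ M) (g : ℕ → M →+ P) : Prop :=
  ∀ (n : ℕ) (x : M), g n x = g (n + 1) (φ x)

theorem IsIterateCocone.apply_iterate {φ : M →+ M} {g : ℕ → M →+ P}
    (hg : IsIterateCocone φ g) (n k : ℕ) (x : M) : g n x = g (n + k) (φ^[k] x) := by
  induction k generalizing n x with
  | zero => rfl
  | succ k ih => rw [hg, ih, Function.iterate_succ_apply, Nat.add_assoc, Nat.add_comm 1 k]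

/-- A cocone whose `n`-th map kills `x` only if some `φ^[k] x` vanishes: `x` goes to the germ at
infinity of `k ↦ φ^[k - n] x` (the truncated entries with `k < n` do not affect the germ). -/
def germCocone (φ : M →+ M) (n : ℕ) : M →+ Germ (atTop : Filter ℕ) M where
  toFun x := ↑(fun k => φ^[k - n] x)
  map_zero' := by
    rw [← Germ.coe_zero]
    congr 1
    funext k
    exact iterate_map_zero φ _
  map_add' x y := by
    rw [← Germ.coe_add]
    congr 1
    funext k
    exact iterate_map_add φ _ x y

theorem germCocone_apply (φ : M →+ M) (n : ℕ) (x : M) :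
    germCocone φ n x = ↑(fun k => φ^[k - n] x) := rfl

theorem isIterateCocone_germCocone (φ : M →+ M) : IsIterateCocone φ (germCocone φ) := by
  intro n x
  rw [germCocone_apply, germCocone_apply, Germ.coe_eq]
  filter_upwards [eventually_gt_atTop n] with k hk
  rw [← Function.iterate_succ_apply]
  congr 2
  omega

theorem exists_iterate_eq_zero_of_germCocone_eq_zero {φ : M →+ M} {n : ℕ} {x : M}
    (hx : germCocone φ n x = 0) : ∃ k, φ^[k] x = 0 := by
  rw [germCocone_apply, ← Germ.coe_zero, Germ.coe_eq] at hx
  obtain ⟨k, hk⟩ := hx.exists_forall_of_atTop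
  exact ⟨k, by simpa using hk (k + n) (Nat.le_add_right k n)⟩

end Cocone

namespace AddMonoidHom

variable {M N : Type*} [AddCommGroup M] [AddCommGroup N] {φ : M →+ M} {ψ : N →+ N}

theorem mem_ker_id_sub_iff {x : M} : x ∈ (AddMonoidHom.id M - φ).ker ↔ φ x = x := by
  rw [mem_ker, sub_apply, id_apply, sub_eq_zero, eq_comm]

theorem sub_iterate_mem_range_id_sub (k : ℕ) (x : M) :
    x - φ^[k] x ∈ (AddMonoidHom.id M - φ).range := by
  induction k with
  | zero => simp
  | succ k ih =>
    have hstep : φ^[k] x - φ (φ^[k] x) ∈ (AddMonoidHom.id M - φ).range := ⟨φ^[k] x, rfl⟩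
    simpa only [sub_add_sub_cancel, Function.iterate_succ_apply'] using add_mem ih hstep

theorem range_id_sub_le_comap (f : M →+ N) (hf : ∀ x, ψ (f x) = f (φ x)) :
    (AddMonoidHom.id M - φ).range ≤ (AddMonoidHom.id N - ψ).range.comap f := by
  rintro _ ⟨w, rfl⟩
  exact ⟨f w, by simp [hf]⟩

def kerIdSubMap (f : M →+ N) (hf : ∀ x, ψ (f x) = f (φ x)) :
    (AddMonoidHom.id M - φ).ker →+ (AddMonoidHom.id N - ψ).ker :=
  (f.comp (AddMonoidHom.id M - φ).ker.subtype).codRestrict _ fun x =>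
    mem_ker_id_sub_iff.mpr <| by
      rw [comp_apply, AddSubgroup.coe_subtype, hf, mem_ker_id_sub_iff.mp x.2]

def cokerIdSubMap (f : M →+ N) (hf : ∀ x, ψ (f x) = f (φ x)) :
    M ⧸ (AddMonoidHom.id M - φ).range →+ N ⧸ (AddMonoidHom.id N - ψ).range :=
  QuotientAddGroup.map _ _ f (range_id_sub_le_comap f hf)

end AddMonoidHom

structure IsIterateColimit {M Mh : Type u} [AddCommGroup M] [AddCommGroup Mh]
    (φ : M →+ M) (ι : ℕ → M →+ Mh) : Prop where
  isIterateCocone : IsIterateCocone φ ι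
  existsUnique_desc : ∀ (P : Type u) [AddCommGroup P] (g : ℕ → M →+ P), IsIterateCocone φ g →
    ∃! h : Mh →+ P, ∀ n, h.comp (ι n) = g n

namespace IsIterateColimit

variable {M Mh : Type u} [AddCommGroup M] [AddCommGroup Mh] {φ : M →+ M} {ι : ℕ → M →+ Mh}
  (hι : IsIterateColimit φ ι)
include hι

theorem hom_ext {P : Type u} [AddCommGroup P] {h₁ h₂ : Mh →+ P}
    (h : ∀ n, h₁.comp (ι n) = h₂.comp (ι n)) : h₁ = h₂ := by
  have hg : IsIterateCocone φ fun n => h₂.comp (ι n) := fun n x => by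
    simp only [AddMonoidHom.comp_apply, ← hι.isIterateCocone n x]
  exact (hι.existsUnique_desc P _ hg).unique h fun _ => rfl

theorem exists_apply_eq (y : Mh) : ∃ n x, ι n x = y := by
  -- the projection onto the quotient by the union of the images kills every `ι n`, so it is `0`
  set S := ⨆ n, (ι n).range
  have hS : QuotientAddGroup.mk' S = 0 := hι.hom_ext fun n => by
    ext x
    simpa using AddSubgroup.mem_iSup_of_mem n (⟨x, rfl⟩ : ι n x ∈ (ι n).range)
  have hmono : Monotone fun n => (ι n).range := monotone_nat_of_le_succ fun n => by
    rintro _ ⟨x, rfl⟩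
    exact ⟨φ x, (hι.isIterateCocone n x).symm⟩
  have hy : y ∈ S := by simpa using DFunLike.congr_fun hS y
  exact (AddSubgroup.mem_iSup_of_directed hmono.directed_le).mp hy

theorem exists_iterate_eq_zero {n : ℕ} {x : M} (hx : ι n x = 0) : ∃ k, φ^[k] x = 0 := by
  obtain ⟨h, hh, -⟩ := hι.existsUnique_desc _ _ (isIterateCocone_germCocone φ)
  apply exists_iterate_eq_zero_of_germCocone_eq_zero (n := n)
  rw [← hh n, AddMonoidHom.comp_apply, hx, map_zero]

section Induced

variable {φh : Mh →+ Mh} (hφh : ∀ n x, φh (ι n x) = ι n (φ x))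
include hφh

theorem bijective_of_commute : Function.Bijective φh := by
  refine ⟨(injective_iff_map_eq_zero φh).mpr fun y hy => ?_, fun y => ?_⟩
  · obtain ⟨n, x, rfl⟩ := hι.exists_apply_eq y
    obtain ⟨k, hk⟩ := hι.exists_iterate_eq_zero (hφh n x ▸ hy)
    rw [hι.isIterateCocone.apply_iterate n (k + 1), Function.iterate_succ_apply, hk, map_zero]
  · obtain ⟨n, x, rfl⟩ := hι.exists_apply_eq y
    exact ⟨ι (n + 1) x, by rw [hφh, ← hι.isIterateCocone]⟩

theorem kerIdSubMap_bijective : Function.Bijective (AddMonoidHom.kerIdSubMap (ι 0) (hφh 0)) := by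
  refine ⟨(injective_iff_map_eq_zero _).mpr fun x hx => ?_, fun y => ?_⟩
  · have hx₀ : ι 0 (x : M) = 0 := congrArg Subtype.val hx
    obtain ⟨k, hk⟩ := hι.exists_iterate_eq_zero hx₀
    rw [Function.iterate_fixed (AddMonoidHom.mem_ker_id_sub_iff.mp x.2)] at hk
    exact Subtype.ext hk
  · obtain ⟨y, hy⟩ := y
    obtain ⟨n, x, rfl⟩ := hι.exists_apply_eq y
    have hx : ι n (x - φ x) = 0 := by
      rw [map_sub, ← hφh, AddMonoidHom.mem_ker_id_sub_iff.mp hy, sub_self]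
    obtain ⟨k, hk⟩ := hι.exists_iterate_eq_zero hx
    have hfix : φ (φ^[k] x) = φ^[k] x := by
      rw [← Function.Commute.iterate_self φ k x, eq_comm, ← sub_eq_zero, ← iterate_map_sub, hk]
    refine ⟨⟨φ^[k] x, AddMonoidHom.mem_ker_id_sub_iff.mpr hfix⟩, Subtype.ext ?_⟩
    change ι 0 (φ^[k] x) = ι n x
    rw [hι.isIterateCocone.apply_iterate 0 (n + k), Function.iterate_fixed hfix,
      hι.isIterateCocone.apply_iterate n k, zero_add]

theorem cokerIdSubMap_bijective :
    Function.Bijective (AddMonoidHom.cokerIdSubMap (ι 0) (hφh 0)) := by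
  have hshift (n : ℕ) (x : M) : ι 0 x = ι n (φ^[n] x) := by
    simpa using hι.isIterateCocone.apply_iterate 0 n x
  refine ⟨(injective_iff_map_eq_zero _).mpr fun q hq => ?_, fun q => ?_⟩
  · obtain ⟨x, rfl⟩ := QuotientAddGroup.mk_surjective q
    rw [AddMonoidHom.cokerIdSubMap, QuotientAddGroup.map_mk, QuotientAddGroup.eq_zero_iff] at hq
    obtain ⟨v, hv⟩ := hq
    obtain ⟨n, w, rfl⟩ := hι.exists_apply_eq v
    have hx : ι n (φ^[n] x - (w - φ w)) = 0 := by
      rw [map_sub, map_sub, ← hshift, ← hv, AddMonoidHom.sub_apply, AddMonoidHom.id_apply, hφh,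
        sub_self]
    obtain ⟨k, hk⟩ := hι.exists_iterate_eq_zero hx
    have hmem : φ^[k + n] x ∈ (AddMonoidHom.id M - φ).range := by
      refine ⟨φ^[k] w, ?_⟩
      rw [iterate_map_sub, iterate_map_sub, sub_eq_zero] at hk
      rw [Function.iterate_add_apply, hk, AddMonoidHom.sub_apply, AddMonoidHom.id_apply,
        Function.Commute.iterate_self φ k w]
    rw [QuotientAddGroup.eq_zero_iff]
    simpa using add_mem (AddMonoidHom.sub_iterate_mem_range_id_sub (k + n) x) hmem
  · obtain ⟨y, rfl⟩ := QuotientAddGroup.mk_surjective q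
    obtain ⟨n, x, rfl⟩ := hι.exists_apply_eq y
    refine ⟨QuotientAddGroup.mk x, ?_⟩
    rw [AddMonoidHom.cokerIdSubMap, QuotientAddGroup.map_mk, QuotientAddGroup.eq_iff_sub_mem,
      hshift n, ← map_sub, ← neg_sub x, map_neg]
    exact neg_mem <| AddMonoidHom.range_id_sub_le_comap (ι n) (hφh n)
      (AddMonoidHom.sub_iterate_mem_range_id_sub n x)

end Induced

end IsIterateColimit

/-- Let `M` be an abelian group and `φ : M → M` an endomorphism.  Let
`M̂` (here `Mh`) be the direct limit of the system `M →φ M →φ M →φ ⋯`, presented by its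
canonical maps `ι n : M →+ Mh` (with `ι n = ι (n+1) ∘ φ`) and its universal property, and
let `φ̂` (here `φh`) be the endomorphism induced by `φ`, i.e. the unique one with
`φh ∘ ι n = ι n ∘ φ` for all `n`.  Then `φh` is an automorphism of `Mh`, `ι 0` restricts
to an isomorphism `ker (id − φ) ≅ ker (id − φh)`, and `ι 0` induces an isomorphism
`coker (id − φ) ≅ coker (id − φh)`. -/
theorem stmt10 (M : Type) [AddCommGroup M] (φ : M →+ M)
    (Mh : Type) [AddCommGroup Mh] (ι : ℕ → (M →+ Mh))
    (hcoc : ∀ (n : ℕ) (x : M), ι n x = ι (n + 1) (φ x))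
    (huniv : ∀ (P : Type) [AddCommGroup P] (g : ℕ → (M →+ P)),
      (∀ (n : ℕ) (x : M), g n x = g (n + 1) (φ x)) →
        ∃! h : Mh →+ P, ∀ n : ℕ, h.comp (ι n) = g n)
    (φh : Mh →+ Mh) (hφh : ∀ (n : ℕ) (x : M), φh (ι n x) = ι n (φ x)) :
    -- `φh` is an automorphism of `Mh`
    Function.Bijective φh ∧
    -- `ι 0` restricts to an isomorphism `ker (id − φ) ≅ ker (id − φh)`
    (∃ e : (AddMonoidHom.ker (AddMonoidHom.id M - φ)) ≃+
        (AddMonoidHom.ker (AddMonoidHom.id Mh - φh)),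
      ∀ x : (AddMonoidHom.ker (AddMonoidHom.id M - φ)), (e x : Mh) = ι 0 (x : M)) ∧
    -- `ι 0` induces an isomorphism `coker (id − φ) ≅ coker (id − φh)`
    (∃ e : (M ⧸ AddMonoidHom.range (AddMonoidHom.id M - φ)) ≃+
        (Mh ⧸ AddMonoidHom.range (AddMonoidHom.id Mh - φh)),
      ∀ x : M, e (QuotientAddGroup.mk x) = QuotientAddGroup.mk (ι 0 x)) := by
  have hι : IsIterateColimit φ ι := ⟨hcoc, huniv⟩
  exact ⟨hι.bijective_of_commute hφh,
    ⟨AddEquiv.ofBijective _ (hι.kerIdSubMap_bijective hφh), fun _ => rfl⟩,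
    ⟨AddEquiv.ofBijective _ (hι.cokerIdSubMap_bijective hφh), fun _ => rfl⟩⟩
end

section
/- Let E be a quiver with E₀ finite, and let G ⊆ E₀ be a subset such that: (i) every sink of E (vertex emitting no arrow) belongs to G; (ii) every vertex lying on a closed path of E belongs to G; and (iii) G ≠ E₀. Then there exists a vertex v ∈ E₀ ∖ G such that s⁻¹(v) ≠ ∅ and r(α) ∈ G for every arrow α ∈ E₁ with s(α) = v. -/
/-! If the conclusion failed, every vertex outside `G` (none of which is a sink) would emit an
arrow ending outside `G`. Following such arrows inside the finite set `E₀ ∖ G` must eventually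
revisit a vertex, which yields a closed path avoiding `G`, contradicting (ii). -/

/-- A (nontrivial) path in the quiver `(E₀, E₁, s, r)`: a nonempty list of arrows in which
the range of each arrow is the source of the next. -/
structure QPath {E₀ E₁ : Type} (s r : E₁ → E₀) where
  arrows : List E₁
  ne : arrows ≠ []
  chain : arrows.Chain' (fun a b => r a = s b)

namespace QPath

variable {E₀ E₁ : Type} {s r : E₁ → E₀}

/-- The source vertex of a path. -/
def source (γ : QPath s r) : E₀ := s (γ.arrows.head γ.ne)

/-- The range vertex of a path. -/
def range (γ : QPath s r) : E₀ := r (γ.arrows.getLast γ.ne)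

/-- The list of vertices visited by a path: `s(α₁), r(α₁), …, r(α_m)`. -/
def vertices (γ : QPath s r) : List E₀ := s (γ.arrows.head γ.ne) :: γ.arrows.map r

end QPath

theorem Set.MapsTo.exists_isPeriodicPt {α : Type*} {f : α → α} {S : Set α} (h : S.MapsTo f S)
    (hS : S.Finite) (hne : S.Nonempty) : ∃ x ∈ S, ∃ n, Function.IsPeriodicPt f (n + 1) x := by
  obtain ⟨x₀, hx₀⟩ := hne
  obtain ⟨m, n, hmn, hmn_eq⟩ :=
    hS.exists_lt_map_eq_of_forall_mem (f := fun k ↦ f^[k] x₀) fun k ↦ h.iterate k hx₀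
  obtain ⟨d, rfl⟩ := Nat.exists_eq_add_of_lt hmn
  refine ⟨f^[m] x₀, h.iterate m hx₀, d, ?_⟩
  rw [Function.IsPeriodicPt, Function.IsFixedPt, ← Function.iterate_add_apply, add_comm]
  exact hmn_eq.symm

namespace QPath

variable {E₀ E₁ : Type} {s r : E₁ → E₀}

def follow (g : E₀ → E₁) (v : E₀) (n : ℕ)
    (hg : ∀ k, s (g ((r ∘ g)^[k] v)) = (r ∘ g)^[k] v) : QPath s r where
  arrows := (List.range (n + 1)).map fun k ↦ g ((r ∘ g)^[k] v)
  ne := by simp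
  chain := by
    rw [List.Chain', List.isChain_map, List.isChain_range_succ]
    intro k _
    rw [hg, Function.iterate_succ_apply']
    rfl

variable {g : E₀ → E₁} {v : E₀} {n : ℕ} {hg : ∀ k, s (g ((r ∘ g)^[k] v)) = (r ∘ g)^[k] v}

theorem source_follow : (follow g v n hg).source = v := by
  simpa [source, follow] using hg 0

theorem range_follow : (follow g v n hg).range = (r ∘ g)^[n + 1] v := by
  simp [range, follow, List.getLast_map, Function.iterate_succ_apply']

theorem exists_iterate_eq_of_mem_vertices_follow {i : E₀} (hi : i ∈ (follow g v n hg).vertices) :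
    ∃ k, i = (r ∘ g)^[k] v := by
  simp only [vertices, follow, List.head_map, List.mem_cons, List.mem_map] at hi
  rcases hi with rfl | ⟨_, ⟨k, -, rfl⟩, rfl⟩
  · exact ⟨0, by simpa using hg 0⟩
  · exact ⟨k + 1, by rw [Function.iterate_succ_apply']; rfl⟩

theorem exists_closed_of_forall_exists_arrow {S : Set E₀}
    (hS : S.Finite) (hne : S.Nonempty) (h : ∀ v ∈ S, ∃ α, s α = v ∧ r α ∈ S) :
    ∃ γ : QPath s r, γ.source = γ.range ∧ ∀ i ∈ γ.vertices, i ∈ S := by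
  -- `choose!` needs `E₁` inhabited to extend `g` to vertices outside `S`.
  have : Nonempty E₁ := let ⟨v, hv⟩ := hne; let ⟨α, _⟩ := h v hv; ⟨α⟩
  choose! g hgs hgr using h
  have hmaps : S.MapsTo (r ∘ g) S := hgr
  obtain ⟨v, hv, n, hper⟩ := hmaps.exists_isPeriodicPt hS hne
  have hg k : s (g ((r ∘ g)^[k] v)) = (r ∘ g)^[k] v := hgs _ (hmaps.iterate k hv)
  refine ⟨follow g v n hg, by rw [source_follow, range_follow, hper.eq], fun i hi ↦ ?_⟩
  obtain ⟨k, rfl⟩ := exists_iterate_eq_of_mem_vertices_follow hi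
  exact hmaps.iterate k hv

end QPath

/-- Let `E` be a quiver with finitely many vertices and let `G ⊆ E₀` be
such that: (i) every sink of `E` belongs to `G`; (ii) every vertex lying on a closed path
of `E` belongs to `G`; (iii) `G ≠ E₀`.  Then there is a vertex `v ∉ G` which emits at
least one arrow and all of whose emitted arrows have range in `G`. -/
theorem stmt14 {E₀ E₁ : Type} [Finite E₀] (s r : E₁ → E₀) (G : Set E₀)
    (hsink : ∀ v : E₀, (∀ α : E₁, s α ≠ v) → v ∈ G)
    (hclosed : ∀ γ : QPath s r, γ.source = γ.range → ∀ i ∈ γ.vertices, i ∈ G)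
    (hne : G ≠ Set.univ) :
    ∃ v : E₀, v ∉ G ∧ (∃ α : E₁, s α = v) ∧ (∀ α : E₁, s α = v → r α ∈ G) := by
  by_contra! hcon
  have hstep : ∀ v ∈ Gᶜ, ∃ α, s α = v ∧ r α ∈ Gᶜ := fun v hv ↦
    hcon v hv (by by_contra! hsinkv; exact hv (hsink v hsinkv))
  obtain ⟨γ, hγ, hγG⟩ :=
    QPath.exists_closed_of_forall_exists_arrow (Set.toFinite _) (Set.nonempty_compl.mpr hne) hstep
  exact hγG γ.source List.mem_cons_self (hclosed γ hγ γ.source List.mem_cons_self)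
end
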